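/- (Theorem 2, flip attacks with nominal estimator.) Let ε ∈ {+1, −1} and suppose the attacker applies u^A_{t-1} = −u_{t-1} + ε φ_{t-1} (ε = +1 for a flip before watermark injection, ε = −1 for a flip after injection), the plant evolves as y^A_t = A y^A_{t-1} + B u^A_{t-1} + w_{t-1}, and the estimator under attack is ŷ^A_t = A y^A_{t-1} + B u_{t-1}. Then the residual satisfies the deterministic identity r^A_t = −2 B u_{t-1} + ε B φ_{t-1} + w_{t-1}; consequently, if w_{t-1} has the multivariate Gaussian law N(0, Q) on ℝⁿ, then r^A_t has law N(−2 B u_{t-1} + ε B φ_{t-1}, Q). -/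

import Mathlib

open MeasureTheory ProbabilityTheory Matrix

open Classical in
/-- The multivariate Gaussian measure `N(m, S)` on `ℝⁿ`, defined (for positive
semidefinite `S`) as the pushforward of a product of standard Gaussians under the
affine map `z ↦ m + S^{1/2} z`; junk value `0` if `S` is not positive semidefinite. -/
noncomputable def multivariateGaussian {n : ℕ} (m : Fin n → ℝ)
    (S : Matrix (Fin n) (Fin n) ℝ) : Measure (Fin n → ℝ) :=
  if h : S.PosSemidef then
    Measure.map (fun z => m + (h.1.eigenvectorUnitary.1 * diagonal (Real.sqrt ∘ h.1.eigenvalues) *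
      (star h.1.eigenvectorUnitary : Matrix (Fin n) (Fin n) ℝ)) *ᵥ z) (Measure.pi fun _ : Fin n => gaussianReal 0 1)
  else 0

lemma flip_residual_eq {R ι κ : Type*} [CommRing R] [Fintype ι] [Fintype κ]
    (A : Matrix ι ι R) (B : Matrix ι κ R) (ε : R) (u φ : κ → R) (y w : ι → R) :
    (A *ᵥ y + B *ᵥ (-u + ε • φ) + w) - (A *ᵥ y + B *ᵥ u)
      = (-2 : R) • (B *ᵥ u) + ε • (B *ᵥ φ) + w := by
  rw [mulVec_add, mulVec_neg, mulVec_smul]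
  module

lemma measurable_mulVec {ι κ : Type*} [Fintype ι] [Fintype κ] (M : Matrix ι κ ℝ) :
    Measurable fun z : κ → ℝ => M *ᵥ z :=
  (continuous_const.matrix_mulVec continuous_id).measurable

lemma isProbabilityMeasure_multivariateGaussian {n : ℕ} (m : Fin n → ℝ)
    {S : Matrix (Fin n) (Fin n) ℝ} (hS : S.PosSemidef) : IsProbabilityMeasure (_root_.multivariateGaussian m S) := by
  rw [_root_.multivariateGaussian, dif_pos hS]
  exact Measure.isProbabilityMeasure_map ((measurable_mulVec _).const_add m).aemeasurable

lemma multivariateGaussian_map_const_add {n : ℕ} (a m : Fin n → ℝ)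
    (S : Matrix (Fin n) (Fin n) ℝ) :
    (_root_.multivariateGaussian m S).map (a + ·) = _root_.multivariateGaussian (a + m) S := by
  unfold _root_.multivariateGaussian
  split_ifs with hS
  · rw [Measure.map_map (measurable_const_add a) ((measurable_mulVec _).const_add m)]
    simp only [Function.comp_def, add_assoc]
  · exact Measure.map_zero _

theorem flip_attack_nominal_estimator_residual_law_general
    {n c : ℕ} {Ω : Type*} [MeasurableSpace Ω] (P : Measure Ω)
    (A : Matrix (Fin n) (Fin n) ℝ) (B : Matrix (Fin n) (Fin c) ℝ)
    (Q : Matrix (Fin n) (Fin n) ℝ) (hQ : Q.PosSemidef)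
    (ε : ℝ)
    (u φ uA : Fin c → ℝ) (huA : uA = -u + ε • φ)
    (yAprev w yA yhatA rA : Ω → Fin n → ℝ)
    (hy : ∀ ω, yA ω = A *ᵥ yAprev ω + B *ᵥ uA + w ω)
    (hyhat : ∀ ω, yhatA ω = A *ᵥ yAprev ω + B *ᵥ u)
    (hr : ∀ ω, rA ω = yA ω - yhatA ω)
    (hw : Measure.map w P = _root_.multivariateGaussian 0 Q) :
    (∀ ω, rA ω = (-2 : ℝ) • (B *ᵥ u) + ε • (B *ᵥ φ) + w ω) ∧
      Measure.map rA P
        = _root_.multivariateGaussian ((-2 : ℝ) • (B *ᵥ u) + ε • (B *ᵥ φ)) Q := by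
  set m : Fin n → ℝ := (-2 : ℝ) • (B *ᵥ u) + ε • (B *ᵥ φ)
  have hresidual : ∀ ω, rA ω = m + w ω := fun ω => by
    rw [hr, hy, hyhat, huA, flip_residual_eq]
  refine ⟨hresidual, ?_⟩
  -- `Measure.map` of a non-measurable map is the junk value `0`, which no Gaussian law is.
  have hw_meas : AEMeasurable w P := by
    have := isProbabilityMeasure_multivariateGaussian 0 hQ
    exact AEMeasurable.of_map_ne_zero (hw ▸ IsProbabilityMeasure.ne_zero _)
  rw [show rA = (m + ·) ∘ w from funext hresidual,
    ← AEMeasurable.map_map_of_aemeasurable (measurable_const_add m).aemeasurable hw_meas, hw,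
    multivariateGaussian_map_const_add, add_zero]

/-- **Theorem 2: flip attacks with the nominal estimator.**
Let `ε ∈ {+1, −1}` and suppose the attacker applies `u^A_{t-1} = −u_{t-1} + ε φ_{t-1}`,
the plant evolves as `y^A_t = A y^A_{t-1} + B u^A_{t-1} + w_{t-1}`, and the estimator
under attack is `ŷ^A_t = A y^A_{t-1} + B u_{t-1}`. Then
`r^A_t = −2 B u_{t-1} + ε B φ_{t-1} + w_{t-1}`; consequently, if `w_{t-1} ∼ N(0, Q)`,
then `r^A_t ∼ N(−2 B u_{t-1} + ε B φ_{t-1}, Q)`. -/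
theorem flip_attack_nominal_estimator_residual_law
    {n c : ℕ} {Ω : Type*} [MeasurableSpace Ω] (P : Measure Ω)
    (A : Matrix (Fin n) (Fin n) ℝ) (B : Matrix (Fin n) (Fin c) ℝ)
    (Q : Matrix (Fin n) (Fin n) ℝ) (hQ : Q.PosSemidef)
    (ε : ℝ) (hε : ε = 1 ∨ ε = -1)
    (u φ uA : Fin c → ℝ) (huA : uA = -u + ε • φ)
    (yAprev w yA yhatA rA : Ω → Fin n → ℝ)
    (hy : ∀ ω, yA ω = A *ᵥ yAprev ω + B *ᵥ uA + w ω)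
    (hyhat : ∀ ω, yhatA ω = A *ᵥ yAprev ω + B *ᵥ u)
    (hr : ∀ ω, rA ω = yA ω - yhatA ω)
    (hw : Measure.map w P = _root_.multivariateGaussian 0 Q) :
    (∀ ω, rA ω = (-2 : ℝ) • (B *ᵥ u) + ε • (B *ᵥ φ) + w ω) ∧
      Measure.map rA P
        = _root_.multivariateGaussian ((-2 : ℝ) • (B *ᵥ u) + ε • (B *ᵥ φ)) Q :=
  flip_attack_nominal_estimator_residual_law_general P A B Q hQ ε u φ uA huA yAprev w yA yhatA rA hy
    hyhat hr hw
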